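/- arXiv:1311.0260 — 3 statements merged into one kernel-verified Lean document; each statement's English description precedes it below -/
import Mathlib

section
/- Let A_d be a discrete connection with domain 𝔘 on the principal G-bundle π: Q → Q/G. The associated discrete connection form A_d: 𝔘 → G, assigning to (q₀,q₁) the unique g ∈ G with (q₀, g⁻¹·q₁) ∈ Hor_{A_d}, is smooth. -/
open Manifold Set

/-!
On the open set where a smooth local section `s` of `(id × π)|_Hor` is defined, the horizontal
lift of `(q₀, π q₁)` is `s (q₀, π q₁)`, and injectivity of `(id × π)|_Hor` together with freeness
of the action forces `A (q₀, q₁) = κ ((s (q₀, π q₁)).2, q₁)`. The right-hand side is a composite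
of smooth maps, since `(s (q₀, π q₁)).2` and `q₁` lie in the same fibre.
-/

theorem eq_of_smul_eq_smul_of_free {G Q : Type*} [Group G] [MulAction G Q]
    (hfree : ∀ (g : G) (q : Q), g • q = q → g = 1) {g h : G} {q : Q} (hgh : g • q = h • q) :
    g = h := by
  have : (h⁻¹ * g) • q = q := by rw [mul_smul, hgh, inv_smul_smul]
  exact (inv_mul_eq_one.mp (hfree _ q this)).symm

theorem eq_division_of_mem_hor {G Q B : Type*} [Group G] [MulAction G Q] {π : Q → B}
    (hfree : ∀ (g : G) (q : Q), g • q = q → g = 1)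
    (hπ_smul : ∀ (g : G) (q : Q), π (g • q) = π q)
    {κ : Q × Q → G} (hκ : ∀ p : Q × Q, π p.1 = π p.2 → κ p • p.1 = p.2)
    {Hor : Set (Q × Q)} (hinj : Set.InjOn (fun p : Q × Q => (p.1, π p.2)) Hor)
    {q₀ q₁ : Q} {a : G} (ha : (q₀, a⁻¹ • q₁) ∈ Hor) {h : Q × Q} (hh : h ∈ Hor)
    (hh_proj : (h.1, π h.2) = (q₀, π q₁)) : a = κ (h.2, q₁) := by
  have hlift : a⁻¹ • q₁ = h.2 :=
    congrArg Prod.snd (hinj ha hh (by simp only [hπ_smul, hh_proj]))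
  apply eq_of_smul_eq_smul_of_free hfree (q := h.2)
  rw [hκ (h.2, q₁) (congrArg Prod.snd hh_proj), ← hlift, smul_inv_smul]

section

variable {E H : Type*} [NormedAddCommGroup E] [NormedSpace ℝ E] [TopologicalSpace H]
  {I : ModelWithCorners ℝ E H} {Q : Type*} [TopologicalSpace Q] [ChartedSpace H Q]
  {EG HG : Type*} [NormedAddCommGroup EG] [NormedSpace ℝ EG] [TopologicalSpace HG]
  {IG : ModelWithCorners ℝ EG HG} {G : Type*} [TopologicalSpace G] [ChartedSpace HG G]
  {F HB : Type*} [NormedAddCommGroup F] [NormedSpace ℝ F] [TopologicalSpace HB]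
  {J : ModelWithCorners ℝ F HB} {B : Type*} [TopologicalSpace B] [ChartedSpace HB B]
  {n : WithTop ℕ∞}

theorem contMDiffOn_division_comp_section {π : Q → B} (hπ : ContMDiff I J n π)
    {κ : Q × Q → G} (hκs : ContMDiffOn (I.prod I) IG n κ {p : Q × Q | π p.1 = π p.2})
    {U : Set (Q × B)} {s : Q × B → Q × Q} (hs : ContMDiffOn (I.prod J) (I.prod I) n s U)
    (hsπ : ∀ x ∈ U, π (s x).2 = x.2) :
    ContMDiffOn (I.prod I) IG n (fun x : Q × Q => κ ((s (x.1, π x.2)).2, x.2))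
      ((fun x : Q × Q => (x.1, π x.2)) ⁻¹' U) := by
  have hproj : ContMDiff (I.prod I) (I.prod J) n (fun x : Q × Q => (x.1, π x.2)) :=
    contMDiff_fst.prodMk (hπ.comp contMDiff_snd)
  have hlift : ContMDiffOn (I.prod I) I n (fun x : Q × Q => (s (x.1, π x.2)).2)
      ((fun x : Q × Q => (x.1, π x.2)) ⁻¹' U) :=
    contMDiff_snd.comp_contMDiffOn (hs.comp hproj.contMDiffOn fun _ hx => hx)
  exact hκs.comp (hlift.prodMk contMDiff_snd.contMDiffOn) fun x hx => hsπ _ hx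

end

theorem discrete_connection_form_is_smooth_general
    {E H : Type*} [NormedAddCommGroup E] [NormedSpace ℝ E]
    [TopologicalSpace H] (I : ModelWithCorners ℝ E H)
    {Q : Type*} [TopologicalSpace Q] [ChartedSpace H Q]
    {EG HG : Type*} [NormedAddCommGroup EG] [NormedSpace ℝ EG]
    [TopologicalSpace HG] (IG : ModelWithCorners ℝ EG HG)
    {G : Type*} [TopologicalSpace G] [ChartedSpace HG G] [Group G]
    [MulAction G Q]
    {F HB : Type*} [NormedAddCommGroup F] [NormedSpace ℝ F]
    [TopologicalSpace HB] (J : ModelWithCorners ℝ F HB)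
    {B : Type*} [TopologicalSpace B] [ChartedSpace HB B] (π : Q → B)
    (hπ : ContMDiff I J (⊤ : ℕ∞) π)
    (hfree : ∀ (g : G) (q : Q), g • q = q → g = 1)
    (hfib : ∀ q₀ q₁ : Q, π q₀ = π q₁ ↔ ∃ g : G, g • q₀ = q₁)
    -- the division map `κ` of the principal bundle, smooth on the fibered product
    (κ : Q × Q → G)
    (hκ : ∀ p : Q × Q, π p.1 = π p.2 → κ p • p.1 = p.2)
    (hκs : ContMDiffOn (I.prod I) IG (⊤ : ℕ∞) κ {p : Q × Q | π p.1 = π p.2})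
    (Hor : Set (Q × Q))
    (hinj : Set.InjOn (fun p : Q × Q => (p.1, π p.2)) Hor)
    -- `(id_Q × π)|_Hor` is a local diffeomorphism: locally it admits smooth sections
    (hsec : ∀ p ∈ Hor, ∃ U : Set (Q × B), IsOpen U ∧ (p.1, π p.2) ∈ U ∧
      ∃ s : Q × B → Q × Q, ContMDiffOn (I.prod J) (I.prod I) (⊤ : ℕ∞) s U ∧
        ∀ x ∈ U, s x ∈ Hor ∧ ((s x).1, π (s x).2) = x) :
    ∀ A : Q × Q → G,
      (∀ p ∈ {p : Q × Q | ∃ g : G, (p.1, g⁻¹ • p.2) ∈ Hor}, (p.1, (A p)⁻¹ • p.2) ∈ Hor) →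
      ContMDiffOn (I.prod I) IG (⊤ : ℕ∞) A {p : Q × Q | ∃ g : G, (p.1, g⁻¹ • p.2) ∈ Hor} := by
  intro A hA
  have hπ_smul : ∀ (g : G) (q : Q), π (g • q) = π q := fun g q => ((hfib q _).mpr ⟨g, rfl⟩).symm
  refine contMDiffOn_of_locally_contMDiffOn fun p ⟨g, hpHor⟩ => ?_
  obtain ⟨U, hUo, hpU, s, hs, hsU⟩ := hsec _ hpHor
  rw [hπ_smul] at hpU
  have hsπ : ∀ x ∈ U, π (s x).2 = x.2 := fun x hx => congrArg Prod.snd (hsU x hx).2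
  refine ⟨_, hUo.preimage (continuous_fst.prodMk (hπ.continuous.comp continuous_snd)), hpU, ?_⟩
  refine ((contMDiffOn_division_comp_section hπ hκs hs hsπ).mono inter_subset_right).congr ?_
  rintro x ⟨hxS, hxU⟩
  exact eq_division_of_mem_hor hfree hπ_smul hκ hinj (hA x hxS) (hsU _ hxU).1 (hsU _ hxU).2

/-- The discrete connection form associated to a discrete connection
`Hor` on the principal `G`-bundle `π : Q → Q/G` — i.e. the map `A : 𝔘 → G` characterized
by `(q₀, (A(q₀,q₁))⁻¹ • q₁) ∈ Hor` — is smooth on the domain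
`𝔘 = {(q₀, g•q₁) : (q₀,q₁) ∈ Hor, g ∈ G}`.  (Smoothness of the division map
`κ` on the fibered product, which holds for any principal bundle, is a hypothesis.) -/
theorem discrete_connection_form_is_smooth
    {E H : Type*} [NormedAddCommGroup E] [NormedSpace ℝ E]
    [TopologicalSpace H] (I : ModelWithCorners ℝ E H)
    {Q : Type*} [TopologicalSpace Q] [ChartedSpace H Q]
    {EG HG : Type*} [NormedAddCommGroup EG] [NormedSpace ℝ EG]
    [TopologicalSpace HG] (IG : ModelWithCorners ℝ EG HG)
    {G : Type*} [TopologicalSpace G] [ChartedSpace HG G] [Group G] [LieGroup IG (⊤ : ℕ∞) G]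
    [MulAction G Q]
    (hsmul : ContMDiff (IG.prod I) I (⊤ : ℕ∞) (fun p : G × Q => p.1 • p.2))
    {F HB : Type*} [NormedAddCommGroup F] [NormedSpace ℝ F]
    [TopologicalSpace HB] (J : ModelWithCorners ℝ F HB)
    {B : Type*} [TopologicalSpace B] [ChartedSpace HB B] (π : Q → B)
    (hπ : ContMDiff I J (⊤ : ℕ∞) π) (hπo : IsOpenMap π) (hπs : Function.Surjective π)
    (hfree : ∀ (g : G) (q : Q), g • q = q → g = 1)
    (hfib : ∀ q₀ q₁ : Q, π q₀ = π q₁ ↔ ∃ g : G, g • q₀ = q₁)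
    -- the division map `κ` of the principal bundle, smooth on the fibered product
    (κ : Q × Q → G)
    (hκ : ∀ p : Q × Q, π p.1 = π p.2 → κ p • p.1 = p.2)
    (hκs : ContMDiffOn (I.prod I) IG (⊤ : ℕ∞) κ {p : Q × Q | π p.1 = π p.2})
    (Hor : Set (Q × Q))
    (hinv : ∀ (g : G), ∀ p ∈ Hor, ((g • p.1, g • p.2) : Q × Q) ∈ Hor)
    (hdiag : ∀ q : Q, (q, q) ∈ Hor)
    (hinj : Set.InjOn (fun p : Q × Q => (p.1, π p.2)) Hor)
    -- `(id_Q × π)|_Hor` is a local diffeomorphism: locally it admits smooth sections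
    (hsec : ∀ p ∈ Hor, ∃ U : Set (Q × B), IsOpen U ∧ (p.1, π p.2) ∈ U ∧
      ∃ s : Q × B → Q × Q, ContMDiffOn (I.prod J) (I.prod I) (⊤ : ℕ∞) s U ∧
        ∀ x ∈ U, s x ∈ Hor ∧ ((s x).1, π (s x).2) = x) :
    ∀ A : Q × Q → G,
      (∀ p ∈ {p : Q × Q | ∃ g : G, (p.1, g⁻¹ • p.2) ∈ Hor}, (p.1, (A p)⁻¹ • p.2) ∈ Hor) →
      ContMDiffOn (I.prod I) IG (⊤ : ℕ∞) A {p : Q × Q | ∃ g : G, (p.1, g⁻¹ • p.2) ∈ Hor} :=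
  discrete_connection_form_is_smooth_general I IG J π hπ hfree hfib κ hκ hκs Hor hinj hsec
end

section
/- Let R be a smooth connected manifold, G a Lie group, Q := R × G with the left G-action g·(r,g') := (r, g g'), which makes p₁: Q → R a principal G-bundle. Let 𝒰'' ⊂ R × R be open containing the diagonal and C: 𝒰'' → G smooth with C(r,r) = e for all r. Then Hor := {((r₀,g₀),(r₁,g₁)) : (r₀,r₁) ∈ 𝒰'', g₀ = g₁ C(r₀,r₁)} defines a discrete connection on p₁, i.e., Hor is a G-invariant submanifold of Q × Q containing the diagonal and (id_Q × p₁)|_{Hor} is an injective local diffeomorphism. -/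
/-!
`Hor` is the image of the continuous map `((r₀, g₀), r₁) ↦ ((r₀, g₀), (r₁, g₀ C(r₀, r₁)⁻¹))` on
the open set `{((r₀, g₀), r₁) | (r₀, r₁) ∈ 𝒰''}`, and this map is a section of `id × p₁`. Hence
`(id × p₁)|_Hor` is a homeomorphism onto that open set. Invariance under `G` is associativity of
the group law, and the diagonal lies in `Hor` because `C(r, r) = e`.
-/

open Manifold Set Topology

theorem isOpenEmbedding_domRestrict_image_of_leftInvOn {X Y : Type*} [TopologicalSpace X]
    [TopologicalSpace Y] {p : X → Y} (hp : Continuous p) {σ : Y → X} {V : Set Y}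
    (hV : IsOpen V) (hσ : ContinuousOn σ V) (hpσ : LeftInvOn p σ V) :
    IsOpenEmbedding ((σ '' V).domRestrict p) := by
  have hp_mapsTo : MapsTo p (σ '' V) V := by
    rintro _ ⟨y, hy, rfl⟩
    rwa [hpσ hy]
  let e : V ≃ₜ σ '' V :=
    { toFun := (mapsTo_image σ V).restrict
      invFun := hp_mapsTo.restrict
      left_inv := fun y => Subtype.ext (hpσ y.2)
      right_inv := by
        rintro ⟨_, y, hy, rfl⟩
        exact Subtype.ext (congrArg σ (hpσ hy))
      continuous_toFun := hσ.mapsToRestrict _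
      continuous_invFun := hp.restrict hp_mapsTo }
  exact hV.isOpenEmbedding_subtypeVal.comp e.symm.isOpenEmbedding

section TrivialBundle

variable {X G : Type*} [Group G]

def trivialBundleHor (U : Set (X × X)) (C : X × X → G) : Set ((X × G) × (X × G)) :=
  {p | (p.1.1, p.2.1) ∈ U ∧ p.1.2 = p.2.2 * C (p.1.1, p.2.1)}

def trivialBundleHorLift (C : X × X → G) (v : (X × G) × X) : (X × G) × (X × G) :=
  (v.1, (v.2, v.1.2 * (C (v.1.1, v.2))⁻¹))

variable {U : Set (X × X)} {C : X × X → G}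

theorem mul_left_mem_trivialBundleHor (g : G) {p : (X × G) × (X × G)}
    (hp : p ∈ trivialBundleHor U C) :
    ((p.1.1, g * p.1.2), (p.2.1, g * p.2.2)) ∈ trivialBundleHor U C :=
  ⟨hp.1, by rw [hp.2, mul_assoc]⟩

theorem diag_mem_trivialBundleHor (hUdiag : ∀ x, (x, x) ∈ U) (hCe : ∀ x, C (x, x) = 1)
    (q : X × G) : (q, q) ∈ trivialBundleHor U C :=
  ⟨hUdiag q.1, by rw [hCe, mul_one]⟩

theorem trivialBundleHor_eq_image_lift :
    trivialBundleHor U C = trivialBundleHorLift C '' {v | (v.1.1, v.2) ∈ U} := by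
  ext ⟨⟨x, g⟩, ⟨y, h⟩⟩
  simp only [trivialBundleHor, trivialBundleHorLift, mem_ofPred_eq, mem_image, Prod.exists,
    Prod.mk.injEq]
  constructor
  · rintro ⟨hxy, rfl⟩
    exact ⟨x, h * C (x, y), y, hxy, ⟨rfl, rfl⟩, rfl, by rw [mul_inv_cancel_right]⟩
  · rintro ⟨x, g, y, hxy, ⟨rfl, rfl⟩, rfl, rfl⟩
    exact ⟨hxy, by rw [inv_mul_cancel_right]⟩

theorem isOpenEmbedding_domRestrict_trivialBundleHor [TopologicalSpace X] [TopologicalSpace G]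
    [IsTopologicalGroup G] (hU : IsOpen U) (hC : ContinuousOn C U) :
    IsOpenEmbedding ((trivialBundleHor U C).domRestrict fun p => (p.1, p.2.1)) := by
  rw [trivialBundleHor_eq_image_lift]
  refine isOpenEmbedding_domRestrict_image_of_leftInvOn (by fun_prop)
    (hU.preimage (by fun_prop)) ?_ fun v _ => rfl
  have hCv : ContinuousOn (fun v : (X × G) × X => C (v.1.1, v.2)) {v | (v.1.1, v.2) ∈ U} :=
    hC.comp (by fun_prop) fun v hv => hv
  exact continuousOn_fst.prodMk (continuousOn_snd.prodMk
    ((continuous_fst.snd.continuousOn).mul hCv.inv))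

end TrivialBundle

theorem trivial_bundle_discrete_connection_general
    {ER HR : Type*} [NormedAddCommGroup ER] [NormedSpace ℝ ER]
    [TopologicalSpace HR] (JR : ModelWithCorners ℝ ER HR)
    {R : Type*} [TopologicalSpace R] [ChartedSpace HR R]
    {EG HG : Type*} [NormedAddCommGroup EG] [NormedSpace ℝ EG]
    [TopologicalSpace HG] (IG : ModelWithCorners ℝ EG HG)
    {G : Type*} [TopologicalSpace G] [ChartedSpace HG G] [Group G] [LieGroup IG (⊤ : ℕ∞) G]
    (U'' : Set (R × R)) (hU : IsOpen U'') (hUdiag : ∀ r : R, (r, r) ∈ U'')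
    (C : R × R → G) (hC : ContMDiffOn (JR.prod JR) IG (⊤ : ℕ∞) C U'')
    (hCe : ∀ r : R, C (r, r) = 1) :
    -- with `Hor := {((r₀,g₀),(r₁,g₁)) | (r₀,r₁) ∈ 𝒰'' ∧ g₀ = g₁ * C (r₀,r₁)}`:
    (∀ (g : G), ∀ p ∈ {p : (R × G) × (R × G) |
        (p.1.1, p.2.1) ∈ U'' ∧ p.1.2 = p.2.2 * C (p.1.1, p.2.1)},
      (((p.1.1, g * p.1.2), (p.2.1, g * p.2.2)) : (R × G) × (R × G)) ∈
        {p : (R × G) × (R × G) |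
          (p.1.1, p.2.1) ∈ U'' ∧ p.1.2 = p.2.2 * C (p.1.1, p.2.1)}) ∧
    (∀ q : R × G, ((q, q) : (R × G) × (R × G)) ∈
      {p : (R × G) × (R × G) |
        (p.1.1, p.2.1) ∈ U'' ∧ p.1.2 = p.2.2 * C (p.1.1, p.2.1)}) ∧
    Set.InjOn (fun p : (R × G) × (R × G) => (p.1, p.2.1))
      {p : (R × G) × (R × G) |
        (p.1.1, p.2.1) ∈ U'' ∧ p.1.2 = p.2.2 * C (p.1.1, p.2.1)} ∧
    IsLocalHomeomorph (fun p : ↥{p : (R × G) × (R × G) |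
        (p.1.1, p.2.1) ∈ U'' ∧ p.1.2 = p.2.2 * C (p.1.1, p.2.1)} =>
      ((((p : (R × G) × (R × G))).1, ((p : (R × G) × (R × G))).2.1) : (R × G) × R)) := by
  have : IsTopologicalGroup G := topologicalGroup_of_lieGroup IG (⊤ : ℕ∞)
  have hproj := isOpenEmbedding_domRestrict_trivialBundleHor hU hC.continuousOn
  exact ⟨fun g _ => mul_left_mem_trivialBundleHor g, diag_mem_trivialBundleHor hUdiag hCe,
    injOn_iff_injective.mpr hproj.injective, hproj.isLocalHomeomorph⟩

/-- On the trivial principal `G`-bundle `p₁ : R × G → R` (with action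
`g • (r, g') = (r, g g')`), given an open `𝒰'' ⊆ R × R` containing the diagonal and a
smooth `C : 𝒰'' → G` with `C(r,r) = e`, the set
`Hor = {((r₀,g₀),(r₁,g₁)) : (r₀,r₁) ∈ 𝒰'', g₀ = g₁ C(r₀,r₁)}`
defines a discrete connection: it is invariant under the (diagonal) `G`-action, contains
the diagonal, and `(id × p₁)|_Hor` is an injective local (homeo/diffeo)morphism. -/
theorem trivial_bundle_discrete_connection
    {ER HR : Type*} [NormedAddCommGroup ER] [NormedSpace ℝ ER]
    [TopologicalSpace HR] (JR : ModelWithCorners ℝ ER HR)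
    {R : Type*} [TopologicalSpace R] [ChartedSpace HR R] [ConnectedSpace R]
    {EG HG : Type*} [NormedAddCommGroup EG] [NormedSpace ℝ EG]
    [TopologicalSpace HG] (IG : ModelWithCorners ℝ EG HG)
    {G : Type*} [TopologicalSpace G] [ChartedSpace HG G] [Group G] [LieGroup IG (⊤ : ℕ∞) G]
    (U'' : Set (R × R)) (hU : IsOpen U'') (hUdiag : ∀ r : R, (r, r) ∈ U'')
    (C : R × R → G) (hC : ContMDiffOn (JR.prod JR) IG (⊤ : ℕ∞) C U'')
    (hCe : ∀ r : R, C (r, r) = 1) :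
    -- with `Hor := {((r₀,g₀),(r₁,g₁)) | (r₀,r₁) ∈ 𝒰'' ∧ g₀ = g₁ * C (r₀,r₁)}`:
    (∀ (g : G), ∀ p ∈ {p : (R × G) × (R × G) |
        (p.1.1, p.2.1) ∈ U'' ∧ p.1.2 = p.2.2 * C (p.1.1, p.2.1)},
      (((p.1.1, g * p.1.2), (p.2.1, g * p.2.2)) : (R × G) × (R × G)) ∈
        {p : (R × G) × (R × G) |
          (p.1.1, p.2.1) ∈ U'' ∧ p.1.2 = p.2.2 * C (p.1.1, p.2.1)}) ∧
    (∀ q : R × G, ((q, q) : (R × G) × (R × G)) ∈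
      {p : (R × G) × (R × G) |
        (p.1.1, p.2.1) ∈ U'' ∧ p.1.2 = p.2.2 * C (p.1.1, p.2.1)}) ∧
    Set.InjOn (fun p : (R × G) × (R × G) => (p.1, p.2.1))
      {p : (R × G) × (R × G) |
        (p.1.1, p.2.1) ∈ U'' ∧ p.1.2 = p.2.2 * C (p.1.1, p.2.1)} ∧
    IsLocalHomeomorph (fun p : ↥{p : (R × G) × (R × G) |
        (p.1.1, p.2.1) ∈ U'' ∧ p.1.2 = p.2.2 * C (p.1.1, p.2.1)} =>
      ((((p : (R × G) × (R × G))).1, ((p : (R × G) × (R × G))).2.1) : (R × G) × R)) :=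
  trivial_bundle_discrete_connection_general JR IG U'' hU hUdiag C hC hCe
end

section
/- Let 𝒰 ⊂ Q × Q be an open (G × G)-invariant subset containing the diagonal, and 𝒜: 𝒰 → G a smooth map with 𝒜(q,q) = e for all q and 𝒜(g₀·q₀, g₁·q₁) = g₁ 𝒜(q₀,q₁) g₀⁻¹ for all (q₀,q₁) ∈ 𝒰 and g₀,g₁ ∈ G. Then e is a regular value of 𝒜, and Hor := 𝒜⁻¹({e}) is a submanifold of Q × Q that defines a discrete connection on π: Q → Q/G whose associated discrete connection form is 𝒜. -/
open Manifold Set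

/-!
Equivariance gives `A (q₀, g • q₁) = g * A (q₀, q₁)`. Hence `g ↦ (q₀, g • q₁)` is a smooth
right inverse of `A` through any point of `Hor = A⁻¹(e)`, so `e` is a regular value; and
`ρ (q₀, q₁) = (q₀, A (q₀, q₁)⁻¹ • q₁)` is a continuous retraction of `U` onto `Hor` along the
`G`-orbits in the second factor. The orbits are the fibres of `π`, which makes
`(q₀, q₁) ↦ (q₀, π q₁)` injective on `Hor` and open there, with `A` as the connection form.
-/

theorem Function.LeftInverse.mfderiv_surjective
    {𝕜 : Type*} [NontriviallyNormedField 𝕜]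
    {E H M : Type*} [NormedAddCommGroup E] [NormedSpace 𝕜 E] [TopologicalSpace H]
    {I : ModelWithCorners 𝕜 E H} [TopologicalSpace M] [ChartedSpace H M]
    {E' H' N : Type*} [NormedAddCommGroup E'] [NormedSpace 𝕜 E'] [TopologicalSpace H']
    {J : ModelWithCorners 𝕜 E' H'} [TopologicalSpace N] [ChartedSpace H' N]
    {f : M → N} {s : N → M} (hfs : Function.LeftInverse f s) {y : N} {x : M} (hx : s y = x)
    (hf : MDifferentiableAt I J f x) (hs : MDifferentiableAt J I s y) :
    Function.Surjective (mfderiv I J f x) := by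
  subst hx
  have hchain : (mfderiv I J f (s y)).comp (mfderiv J I s y) = ContinuousLinearMap.id 𝕜 _ := by
    rw [← mfderiv_comp y hf hs, hfs.comp_eq_id, mfderiv_id]
  exact fun v => ⟨mfderiv J I s y v, congr($hchain v)⟩

theorem Topology.IsOpenEmbedding.domRestrict_of_retraction
    {X Y : Type*} [TopologicalSpace X] [TopologicalSpace Y]
    {U S : Set X} {F : X → Y} {ρ : X → X}
    (hU : IsOpen U) (hSU : S ⊆ U) (hρ : ContinuousOn ρ U) (hρS : MapsTo ρ U S)
    (hρfix : ∀ x ∈ S, ρ x = x) (hFρ : ∀ x ∈ U, F (ρ x) = F x)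
    (hF : Continuous F) (hFo : IsOpenMap F) (hFinj : InjOn F S) :
    IsOpenEmbedding (S.domRestrict F) := by
  refine .of_continuous_injective_isOpenMap (hF.comp continuous_subtype_val) hFinj.injective ?_
  rintro _ ⟨W, hW, rfl⟩
  have himage : S.domRestrict F '' (Subtype.val ⁻¹' W) = F '' (U ∩ ρ ⁻¹' W) := by
    apply Subset.antisymm
    · rintro _ ⟨x, hxW, rfl⟩
      exact ⟨x, ⟨hSU x.2, by rwa [mem_preimage, hρfix x x.2]⟩, rfl⟩
    · rintro _ ⟨x, ⟨hxU, hxW⟩, rfl⟩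
      exact ⟨⟨ρ x, hρS hxU⟩, hxW, hFρ x hxU⟩
  rw [himage]
  exact hFo _ (hρ.isOpen_inter_preimage hU hW)

namespace DiscreteConnection

variable {G Q : Type*} [Group G] [MulAction G Q] {U : Set (Q × Q)} {A : Q × Q → G}

def Hor (U : Set (Q × Q)) (A : Q × Q → G) : Set (Q × Q) := {p | p ∈ U ∧ A p = 1}

section Equivariant

variable (hAeq : ∀ p ∈ U, ∀ g₀ g₁ : G, A (g₀ • p.1, g₁ • p.2) = g₁ * A p * g₀⁻¹)
include hAeq

theorem apply_fst_smul_snd {p : Q × Q} (hp : p ∈ U) (g : G) : A (p.1, g • p.2) = g * A p := by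
  simpa using hAeq p hp 1 g

theorem smul_mem_hor (hUinv : ∀ g₀ g₁ : G, ∀ p ∈ U, ((g₀ • p.1, g₁ • p.2) : Q × Q) ∈ U)
    (g : G) {p : Q × Q} (hp : p ∈ Hor U A) : ((g • p.1, g • p.2) : Q × Q) ∈ Hor U A :=
  ⟨hUinv g g p hp.1, by rw [hAeq p hp.1 g g, hp.2, mul_one, mul_inv_cancel]⟩

theorem retraction_mem_hor (hUinv : ∀ g₀ g₁ : G, ∀ p ∈ U, ((g₀ • p.1, g₁ • p.2) : Q × Q) ∈ U)
    {p : Q × Q} (hp : p ∈ U) : (p.1, (A p)⁻¹ • p.2) ∈ Hor U A := by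
  refine ⟨by simpa using hUinv 1 (A p)⁻¹ p hp, ?_⟩
  rw [apply_fst_smul_snd hAeq hp, inv_mul_cancel]

theorem leftInverse_orbitMap {p : Q × Q} (hp : p ∈ Hor U A) :
    Function.LeftInverse A (fun g : G => (p.1, g • p.2)) := fun g => by
  rw [apply_fst_smul_snd hAeq hp.1, hp.2, mul_one]

theorem injOn_hor {B : Type*} {π : Q → B}
    (hfib : ∀ q₀ q₁ : Q, π q₀ = π q₁ → ∃ g : G, g • q₀ = q₁) :
    InjOn (fun p : Q × Q => (p.1, π p.2)) (Hor U A) := by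
  rintro ⟨a₀, a₁⟩ ha ⟨b₀, b₁⟩ hb hab
  obtain ⟨rfl, hπ⟩ := Prod.mk.inj hab
  obtain ⟨g, rfl⟩ := hfib a₁ b₁ hπ
  have hg : g = 1 := (leftInverse_orbitMap hAeq ha g).symm.trans hb.2
  rw [hg, one_smul]

end Equivariant

end DiscreteConnection

open DiscreteConnection

theorem discrete_connection_form_defines_discrete_connection_general
    {E H : Type*} [NormedAddCommGroup E] [NormedSpace ℝ E]
    [TopologicalSpace H] (I : ModelWithCorners ℝ E H)
    {Q : Type*} [TopologicalSpace Q] [ChartedSpace H Q]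
    {EG HG : Type*} [NormedAddCommGroup EG] [NormedSpace ℝ EG]
    [TopologicalSpace HG] (IG : ModelWithCorners ℝ EG HG)
    {G : Type*} [TopologicalSpace G] [ChartedSpace HG G] [Group G] [LieGroup IG (⊤ : ℕ∞) G]
    [MulAction G Q]
    (hsmul : ContMDiff (IG.prod I) I (⊤ : ℕ∞) (fun p : G × Q => p.1 • p.2))
    {B : Type*} [TopologicalSpace B] (π : Q → B)
    (hπc : Continuous π) (hπo : IsOpenMap π)
    (hfib : ∀ q₀ q₁ : Q, π q₀ = π q₁ ↔ ∃ g : G, g • q₀ = q₁)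
    (U : Set (Q × Q)) (hU : IsOpen U)
    (hUinv : ∀ (g₀ g₁ : G), ∀ p ∈ U, ((g₀ • p.1, g₁ • p.2) : Q × Q) ∈ U)
    (hUdiag : ∀ q : Q, (q, q) ∈ U)
    (A : Q × Q → G) (hAs : ContMDiffOn (I.prod I) IG (⊤ : ℕ∞) A U)
    (hAe : ∀ q : Q, A (q, q) = 1)
    (hAeq : ∀ p ∈ U, ∀ g₀ g₁ : G, A (g₀ • p.1, g₁ • p.2) = g₁ * A p * g₀⁻¹) :
    -- `e` is a regular value of `𝒜`:
    (∀ p ∈ {p : Q × Q | p ∈ U ∧ A p = 1},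
      Function.Surjective (mfderiv (I.prod I) IG A p)) ∧
    -- `Hor := 𝒜⁻¹({e})` defines a discrete connection:
    (∀ (g : G), ∀ p ∈ {p : Q × Q | p ∈ U ∧ A p = 1},
      ((g • p.1, g • p.2) : Q × Q) ∈ {p : Q × Q | p ∈ U ∧ A p = 1}) ∧
    (∀ q : Q, ((q, q) : Q × Q) ∈ {p : Q × Q | p ∈ U ∧ A p = 1}) ∧
    Set.InjOn (fun p : Q × Q => (p.1, π p.2)) {p : Q × Q | p ∈ U ∧ A p = 1} ∧
    IsLocalHomeomorph (fun p : ↥{p : Q × Q | p ∈ U ∧ A p = 1} =>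
      (((p : Q × Q)).1, π ((p : Q × Q)).2)) ∧
    -- and its associated discrete connection form is `𝒜`:
    (∀ p ∈ U, (p.1, (A p)⁻¹ • p.2) ∈ {p : Q × Q | p ∈ U ∧ A p = 1}) := by
  have hinj := injOn_hor hAeq (π := π) fun q₀ q₁ => (hfib q₀ q₁).mp
  have hreg (p : Q × Q) (hp : p ∈ Hor U A) : Function.Surjective (mfderiv (I.prod I) IG A p) :=
    (leftInverse_orbitMap hAeq hp).mfderiv_surjective (y := 1) (by simp)
      ((hAs.contMDiffAt (hU.mem_nhds hp.1)).mdifferentiableAt (by simp))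
      ((contMDiff_const.prodMk (hsmul.comp (contMDiff_id.prodMk contMDiff_const))).mdifferentiableAt
        (by simp))
  have hρ : ContinuousOn (fun p : Q × Q => (p.1, (A p)⁻¹ • p.2)) U :=
    continuousOn_fst.prodMk <| hsmul.continuous.comp_continuousOn
      (((contMDiff_inv IG (⊤ : ℕ∞)).continuous.comp_continuousOn hAs.continuousOn).prodMk
        continuousOn_snd)
  have hloc : IsLocalHomeomorph ((Hor U A).domRestrict fun p : Q × Q => (p.1, π p.2)) :=
    (Topology.IsOpenEmbedding.domRestrict_of_retraction hU (fun _ hp => hp.1) hρ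
      (fun _ hp => retraction_mem_hor hAeq hUinv hp) (fun p hp => by simp [hp.2])
      (fun p _ => congrArg (Prod.mk p.1) ((hfib _ _).mpr ⟨(A p)⁻¹, rfl⟩).symm)
      (continuous_fst.prodMk (hπc.comp continuous_snd)) (IsOpenMap.id.prodMap hπo)
      hinj).isLocalHomeomorph
  exact ⟨hreg, fun g _ => smul_mem_hor hAeq hUinv g, fun q => ⟨hUdiag q, hAe q⟩, hinj, hloc,
    fun _ => retraction_mem_hor hAeq hUinv⟩

/-- Given an open `(G × G)`-invariant `𝒰 ⊆ Q × Q` containing the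
diagonal and a smooth `𝒜 : 𝒰 → G` with `𝒜(q,q) = e` and
`𝒜(g₀•q₀, g₁•q₁) = g₁ 𝒜(q₀,q₁) g₀⁻¹`, the identity `e` is a regular value of `𝒜`
and `Hor := 𝒜⁻¹({e})` defines a discrete connection on `π : Q → Q/G` whose associated
discrete connection form is `𝒜`. -/
theorem discrete_connection_form_defines_discrete_connection
    {E H : Type*} [NormedAddCommGroup E] [NormedSpace ℝ E]
    [TopologicalSpace H] (I : ModelWithCorners ℝ E H)
    {Q : Type*} [TopologicalSpace Q] [ChartedSpace H Q]
    {EG HG : Type*} [NormedAddCommGroup EG] [NormedSpace ℝ EG]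
    [TopologicalSpace HG] (IG : ModelWithCorners ℝ EG HG)
    {G : Type*} [TopologicalSpace G] [ChartedSpace HG G] [Group G] [LieGroup IG (⊤ : ℕ∞) G]
    [MulAction G Q]
    (hsmul : ContMDiff (IG.prod I) I (⊤ : ℕ∞) (fun p : G × Q => p.1 • p.2))
    {B : Type*} [TopologicalSpace B] (π : Q → B)
    (hπc : Continuous π) (hπo : IsOpenMap π) (hπs : Function.Surjective π)
    (hfree : ∀ (g : G) (q : Q), g • q = q → g = 1)
    (hfib : ∀ q₀ q₁ : Q, π q₀ = π q₁ ↔ ∃ g : G, g • q₀ = q₁)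
    (U : Set (Q × Q)) (hU : IsOpen U)
    (hUinv : ∀ (g₀ g₁ : G), ∀ p ∈ U, ((g₀ • p.1, g₁ • p.2) : Q × Q) ∈ U)
    (hUdiag : ∀ q : Q, (q, q) ∈ U)
    (A : Q × Q → G) (hAs : ContMDiffOn (I.prod I) IG (⊤ : ℕ∞) A U)
    (hAe : ∀ q : Q, A (q, q) = 1)
    (hAeq : ∀ p ∈ U, ∀ g₀ g₁ : G, A (g₀ • p.1, g₁ • p.2) = g₁ * A p * g₀⁻¹) :
    -- `e` is a regular value of `𝒜`:
    (∀ p ∈ {p : Q × Q | p ∈ U ∧ A p = 1},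
      Function.Surjective (mfderiv (I.prod I) IG A p)) ∧
    -- `Hor := 𝒜⁻¹({e})` defines a discrete connection:
    (∀ (g : G), ∀ p ∈ {p : Q × Q | p ∈ U ∧ A p = 1},
      ((g • p.1, g • p.2) : Q × Q) ∈ {p : Q × Q | p ∈ U ∧ A p = 1}) ∧
    (∀ q : Q, ((q, q) : Q × Q) ∈ {p : Q × Q | p ∈ U ∧ A p = 1}) ∧
    Set.InjOn (fun p : Q × Q => (p.1, π p.2)) {p : Q × Q | p ∈ U ∧ A p = 1} ∧
    IsLocalHomeomorph (fun p : ↥{p : Q × Q | p ∈ U ∧ A p = 1} =>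
      (((p : Q × Q)).1, π ((p : Q × Q)).2)) ∧
    -- and its associated discrete connection form is `𝒜`:
    (∀ p ∈ U, (p.1, (A p)⁻¹ • p.2) ∈ {p : Q × Q | p ∈ U ∧ A p = 1}) :=
  discrete_connection_form_defines_discrete_connection_general I IG hsmul π hπc hπo hfib U hU hUinv
    hUdiag A hAs hAe hAeq
end
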